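/- arXiv:1802.03073 — 2 statements merged into one kernel-verified Lean document; each statement's English description precedes it below -/
import Mathlib

section
/- Let q, b ∈ ℂ with 0 < |q| < 1, b ≠ 0, b² ≠ 1, and suppose b ≠ q^m and b ≠ −q^m for every integer m (so that all denominators below are nonzero). Suppose (α_n)_{n≥0}, (β_n)_{n≥0} form a Bailey pair relative to (1, q), i.e. β_n = Σ_{j=0}^{n} α_j / ((q;q)_{n−j} (q;q)_{n+j}) for all n ≥ 0. For a parameter c define α*_n(c) = [(1 − q^{2n+1})(q/c;q)_n (−c)^n q^{n(n−1)/2} / ((1 − q)(cq;q)_n)] · Σ_{j=0}^{n} [(c;q)_j / (q/c;q)_j] (−c)^{−j} q^{−j(j−1)/2} α_j, and set L1_n = α*_n(b)/(2(1 − b)) + α*_n(−b)/(2(1 + b)) and L2_n = β_n / (1 − b² q^{2n}). Then (L1_n, L2_n) is a Bailey pair relative to (q, q), i.e. L2_n = Σ_{j=0}^{n} L1_j / ((q;q)_{n−j} (q²;q)_{n+j}) for all n ≥ 0. -/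
/-!
For a single parameter `c`, Lovejoy's construction turns a Bailey pair `(α, β)` relative to `(1, q)`
into the Bailey pair `(α*(c), (1 - c) β_n / (1 - c q^n))` relative to `(q, q)`: writing `α*_j(c)` as a
coefficient times a weighted sum of the `α_i`, exchanging the two sums leaves, for each `i`, a tail sum
over `j ≥ i` of the coefficients, which telescopes to a closed form. The lemma is then the average of
the cases `c = b` and `c = -b` with weights `1 / (2(1 ∓ b))`, because
`1 / (2(1 - b q^n)) + 1 / (2(1 + b q^n)) = 1 / (1 - b² q^(2n))`.
-/

open Finset

/-- The q-Pochhammer symbol `(z;q)_n = ∏_{k=0}^{n-1} (1 - z q^k)`. -/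
def qPoch (z q : ℂ) (n : ℕ) : ℂ := ∏ k ∈ Finset.range n, (1 - z * q ^ k)

/-- Lovejoy's transformed sequence `α*_n(c)` at `a = 1`. -/
noncomputable def alphaStar (q c : ℂ) (α : ℕ → ℂ) (n : ℕ) : ℂ :=
  (1 - q ^ (2 * n + 1)) * qPoch (q / c) q n * (-c) ^ n * q ^ (n * (n - 1) / 2) /
      ((1 - q) * qPoch (c * q) q n) *
    ∑ j ∈ Finset.range (n + 1),
      qPoch c q j / qPoch (q / c) q j * (-c) ^ (-(j : ℤ)) *
        q ^ (-((j * (j - 1) / 2 : ℕ) : ℤ)) * α j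

lemma qPoch_succ (z q : ℂ) (n : ℕ) : qPoch z q (n + 1) = qPoch z q n * (1 - z * q ^ n) :=
  prod_range_succ _ n

lemma qPoch_succ' (z q : ℂ) (n : ℕ) : qPoch z q (n + 1) = (1 - z) * qPoch (z * q) q n := by
  simp only [qPoch, prod_range_succ', pow_zero, mul_one, pow_succ, mul_assoc, mul_comm]

lemma qPoch_ne_zero {z q : ℂ} (h : ∀ k : ℕ, 1 - z * q ^ k ≠ 0) (n : ℕ) : qPoch z q n ≠ 0 :=
  prod_ne_zero_iff.mpr fun k _ ↦ h k

noncomputable def alphaStarCoeff (q c : ℂ) (n : ℕ) : ℂ :=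
  (1 - q ^ (2 * n + 1)) * qPoch (q / c) q n * (-c) ^ n * q ^ (n * (n - 1) / 2) /
    ((1 - q) * qPoch (c * q) q n)

noncomputable def alphaStarWeight (q c : ℂ) (j : ℕ) : ℂ :=
  qPoch c q j / qPoch (q / c) q j * (-c) ^ (-(j : ℤ)) * q ^ (-((j * (j - 1) / 2 : ℕ) : ℤ))

lemma alphaStar_eq_coeff_mul_sum (q c : ℂ) (α : ℕ → ℂ) (n : ℕ) :
    alphaStar q c α n = alphaStarCoeff q c n * ∑ j ∈ range (n + 1), alphaStarWeight q c j * α j :=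
  rfl

/-- Closed form of the tail sum `∑_{j=i}^{n} alphaStarCoeff q c j / ((q;q)_{n-j} (q²;q)_{n+j})`. -/
noncomputable def alphaStarTail (q c : ℂ) (i n : ℕ) : ℂ :=
  (1 - c) * qPoch (q / c) q i * (-c) ^ i * q ^ (i * (i - 1) / 2) /
    ((1 - c * q ^ n) * qPoch q q (n - i) * qPoch q q (n + i) * qPoch c q i)

section
variable {q c : ℂ} (hq : ∀ k : ℕ, 1 - q ^ (k + 1) ≠ 0) (hcq : ∀ k : ℕ, 1 - c * q ^ k ≠ 0)

include hq in
lemma qPoch_self_ne_zero (n : ℕ) : qPoch q q n ≠ 0 :=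
  qPoch_ne_zero (fun k ↦ by simpa only [pow_succ'] using hq k) n

include hq in
lemma qPoch_sq_ne_zero (n : ℕ) : qPoch (q ^ 2) q n ≠ 0 :=
  qPoch_ne_zero (fun k ↦ by simpa only [← pow_add, add_comm 2 k] using hq (k + 1)) n

include hq hcq in
lemma alphaStarCoeff_div (k m p : ℕ) :
    alphaStarCoeff q c k / (qPoch q q m * qPoch (q ^ 2) q p) =
      (1 - q ^ (2 * k + 1)) * (1 - c) * qPoch (q / c) q k * (-c) ^ k * q ^ (k * (k - 1) / 2) /
        (qPoch c q (k + 1) * qPoch q q m * qPoch q q (p + 1)) := by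
  have h1q : (1 : ℂ) - q ≠ 0 := by simpa using hq 0
  have h1c : (1 : ℂ) - c ≠ 0 := by simpa using hcq 0
  have hcq' : qPoch (c * q) q k ≠ 0 :=
    qPoch_ne_zero (fun i ↦ by simpa only [mul_assoc, ← pow_succ'] using hcq (i + 1)) k
  rw [qPoch_succ', qPoch_succ' q, ← sq, alphaStarCoeff]
  have := qPoch_self_ne_zero hq m
  have := qPoch_sq_ne_zero hq p
  field_simp

include hq hcq in
lemma alphaStarTail_self (n : ℕ) :
    alphaStarTail q c n n = alphaStarCoeff q c n / (qPoch q q (n - n) * qPoch (q ^ 2) q (n + n)) := by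
  rw [alphaStarCoeff_div hq hcq, alphaStarTail, Nat.sub_self, two_mul, qPoch_succ, qPoch_succ q q]
  have := qPoch_self_ne_zero hq (n + n)
  have := qPoch_ne_zero hcq n
  have := hcq n
  have : 1 - q * q ^ (n + n) ≠ 0 := by simpa only [← pow_succ'] using hq (n + n)
  field_simp
  ring

include hq hcq in
lemma alphaStarTail_eq_add (hc : c ≠ 0) {j n : ℕ} (hjn : j < n) :
    alphaStarTail q c j n = alphaStarCoeff q c j / (qPoch q q (n - j) * qPoch (q ^ 2) q (n + j)) +
      alphaStarTail q c (j + 1) n := by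
  -- After cancelling common factors this is the polynomial identity
  -- `(1 - q^(2j+1)) (1 - c q^n) + (q^(2j+1) - c q^j) (1 - q^(n-j)) = (1 - c q^j) (1 - q^(n+j+1))`.
  obtain ⟨d, rfl⟩ : ∃ d, n = j + d + 1 := ⟨n - j - 1, by omega⟩
  rw [alphaStarCoeff_div hq hcq, alphaStarTail, alphaStarTail,
    show j + d + 1 - j = d + 1 by omega, show j + d + 1 - (j + 1) = d by omega,
    show j + d + 1 + (j + 1) = j + d + 1 + j + 1 by omega,
    qPoch_succ q q (j + d + 1 + j), qPoch_succ q q d, qPoch_succ c q j, qPoch_succ (q / c) q j,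
    Nat.triangle_succ, pow_succ (-c) j, pow_add q (j * (j - 1) / 2) j]
  have := qPoch_self_ne_zero hq (j + d + 1 + j)
  have := qPoch_self_ne_zero hq d
  have := qPoch_ne_zero hcq j
  have := hcq j
  have := hcq (j + d + 1)
  have : 1 - q * q ^ d ≠ 0 := by simpa only [← pow_succ'] using hq d
  have : 1 - q * q ^ (j + d + 1 + j) ≠ 0 := by simpa only [← pow_succ'] using hq (j + d + 1 + j)
  field_simp
  ring

include hq hcq in
lemma sum_Ico_alphaStarCoeff_div (hc : c ≠ 0) {i n : ℕ} (hin : i ≤ n) :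
    ∑ j ∈ Ico i (n + 1), alphaStarCoeff q c j / (qPoch q q (n - j) * qPoch (q ^ 2) q (n + j)) =
      alphaStarTail q c i n := by
  obtain ⟨d, rfl⟩ := Nat.exists_eq_add_of_le' hin
  induction d generalizing i with
  | zero =>
    rw [zero_add, Nat.Ico_succ_singleton, sum_singleton, alphaStarTail_self hq hcq]
  | succ d ih =>
    rw [sum_eq_sum_Ico_succ_bot (by omega), show d + 1 + i = d + (i + 1) by omega,
      ih (by omega), alphaStarTail_eq_add hq hcq hc (j := i) (by omega)]

include hq hcq in
lemma alphaStarWeight_mul_alphaStarTail (hq₀ : q ≠ 0) (hc : c ≠ 0)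
    (hqc : ∀ k : ℕ, 1 - q / c * q ^ k ≠ 0) (i n : ℕ) :
    alphaStarWeight q c i * alphaStarTail q c i n =
      (1 - c) / ((1 - c * q ^ n) * qPoch q q (n - i) * qPoch q q (n + i)) := by
  have := qPoch_ne_zero hcq i
  have := qPoch_ne_zero hqc i
  have := qPoch_self_ne_zero hq (n - i)
  have := qPoch_self_ne_zero hq (n + i)
  have := hcq n
  have := pow_ne_zero i (neg_ne_zero.mpr hc)
  rw [alphaStarWeight, alphaStarTail, zpow_neg, zpow_neg, zpow_natCast, zpow_natCast]
  field_simp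

include hq hcq in
theorem sum_alphaStar_div (hq₀ : q ≠ 0) (hc : c ≠ 0)
    (hqc : ∀ k : ℕ, 1 - q / c * q ^ k ≠ 0) {α β : ℕ → ℂ}
    (hαβ : ∀ n : ℕ, β n = ∑ j ∈ range (n + 1), α j / (qPoch q q (n - j) * qPoch q q (n + j)))
    (n : ℕ) :
    ∑ j ∈ range (n + 1), alphaStar q c α j / (qPoch q q (n - j) * qPoch (q ^ 2) q (n + j)) =
      (1 - c) / (1 - c * q ^ n) * β n := by
  have hswap := sum_Ico_Ico_comm 0 (n + 1) fun i j ↦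
    alphaStarWeight q c i * α i *
      (alphaStarCoeff q c j / (qPoch q q (n - j) * qPoch (q ^ 2) q (n + j)))
  simp only [← range_eq_Ico, ← mul_sum] at hswap
  calc ∑ j ∈ range (n + 1), alphaStar q c α j / (qPoch q q (n - j) * qPoch (q ^ 2) q (n + j))
      = ∑ j ∈ range (n + 1), ∑ i ∈ range (j + 1), alphaStarWeight q c i * α i *
          (alphaStarCoeff q c j / (qPoch q q (n - j) * qPoch (q ^ 2) q (n + j))) := by
        refine sum_congr rfl fun j _ ↦ ?_
        rw [alphaStar_eq_coeff_mul_sum, mul_comm, mul_div_assoc, sum_mul]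
    _ = ∑ i ∈ range (n + 1), alphaStarWeight q c i * α i * alphaStarTail q c i n := by
        rw [← hswap]
        refine sum_congr rfl fun i hi ↦ ?_
        rw [sum_Ico_alphaStarCoeff_div hq hcq hc (Nat.lt_succ_iff.mp (mem_range.mp hi))]
    _ = (1 - c) / (1 - c * q ^ n) * β n := by
        rw [hαβ, mul_sum]
        refine sum_congr rfl fun i _ ↦ ?_
        rw [mul_right_comm, alphaStarWeight_mul_alphaStarTail hq hcq hq₀ hc hqc]
        simp only [div_eq_mul_inv, mul_inv]
        ring
end

lemma one_sub_pow_succ_ne_zero {q : ℂ} (hq : ‖q‖ < 1) (k : ℕ) : 1 - q ^ (k + 1) ≠ 0 := by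
  refine sub_ne_zero.mpr fun h ↦ (pow_lt_one₀ (norm_nonneg q) hq k.succ_ne_zero).ne ?_
  rw [← norm_pow, ← h, norm_one]

lemma one_sub_mul_pow_ne_zero {q c : ℂ} (hc : ∀ m : ℤ, c ≠ q ^ m) (k : ℕ) :
    1 - c * q ^ k ≠ 0 := by
  refine sub_ne_zero.mpr fun h ↦ hc (-k) ?_
  rw [zpow_neg, zpow_natCast]
  exact eq_inv_of_mul_eq_one_left h.symm

lemma one_sub_div_mul_pow_ne_zero {q c : ℂ} (hc₀ : c ≠ 0) (hc : ∀ m : ℤ, c ≠ q ^ m) (k : ℕ) :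
    1 - q / c * q ^ k ≠ 0 := by
  refine sub_ne_zero.mpr fun h ↦ hc (k + 1 : ℕ) ?_
  rw [div_mul_eq_mul_div, eq_comm, div_eq_one_iff_eq hc₀] at h
  rw [← h, zpow_natCast, pow_succ']

theorem sum_alphaStar_div_of_norm_lt_one {q c : ℂ} (hq₀ : q ≠ 0) (hq : ‖q‖ < 1) (hc₀ : c ≠ 0)
    (hc : ∀ m : ℤ, c ≠ q ^ m) {α β : ℕ → ℂ}
    (hαβ : ∀ n : ℕ, β n = ∑ j ∈ range (n + 1), α j / (qPoch q q (n - j) * qPoch q q (n + j)))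
    (n : ℕ) :
    ∑ j ∈ range (n + 1), alphaStar q c α j / (qPoch q q (n - j) * qPoch (q ^ 2) q (n + j)) =
      (1 - c) / (1 - c * q ^ n) * β n :=
  sum_alphaStar_div (one_sub_pow_succ_ne_zero hq) (one_sub_mul_pow_ne_zero hc) hq₀ hc₀
    (one_sub_div_mul_pow_ne_zero hc₀ hc) hαβ n

theorem stmt7_general (q b : ℂ) (hq0 : 0 < ‖q‖) (hq1 : ‖q‖ < 1)
    (hb : b ≠ 0)
    (hbq : ∀ m : ℤ, b ≠ q ^ m ∧ b ≠ -q ^ m)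
    (α β : ℕ → ℂ)
    (hBailey : ∀ n : ℕ, β n = ∑ j ∈ Finset.range (n + 1),
      α j / (qPoch q q (n - j) * qPoch q q (n + j))) :
    ∀ n : ℕ,
      β n / (1 - b ^ 2 * q ^ (2 * n)) =
        ∑ j ∈ Finset.range (n + 1),
          (alphaStar q b α j / (2 * (1 - b)) + alphaStar q (-b) α j / (2 * (1 + b))) /
            (qPoch q q (n - j) * qPoch (q ^ 2) q (n + j)) := by
  intro n
  have hq₀ : q ≠ 0 := norm_pos_iff.mp hq0
  have hb' : ∀ m : ℤ, b ≠ q ^ m := fun m ↦ (hbq m).1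
  have hnb' : ∀ m : ℤ, -b ≠ q ^ m := fun m h ↦ (hbq m).2 (by rw [← h, neg_neg])
  simp only [add_div, sum_add_distrib, div_right_comm _ (2 * (1 - b) : ℂ),
    div_right_comm _ (2 * (1 + b) : ℂ), ← sum_div,
    sum_alphaStar_div_of_norm_lt_one hq₀ hq1 hb hb' hBailey,
    sum_alphaStar_div_of_norm_lt_one hq₀ hq1 (neg_ne_zero.mpr hb) hnb' hBailey]
  have h1b : 1 - b ≠ 0 := by simpa using one_sub_mul_pow_ne_zero hb' 0
  have h1nb : 1 + b ≠ 0 := by simpa using one_sub_mul_pow_ne_zero hnb' 0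
  have hbqn : 1 - b * q ^ n ≠ 0 := one_sub_mul_pow_ne_zero hb' n
  have hnbqn : 1 + b * q ^ n ≠ 0 := by simpa using one_sub_mul_pow_ne_zero hnb' n
  rw [show 1 - b ^ 2 * q ^ (2 * n) = (1 - b * q ^ n) * (1 + b * q ^ n) by ring]
  simp only [sub_neg_eq_add, neg_mul]
  field_simp
  ring

/-- Lemma 2.2 of the paper: averaging Lovejoy's construction at `b` and `-b` gives a
Bailey pair `(L1, L2)` relative to `(q, q)`. -/
theorem stmt7 (q b : ℂ) (hq0 : 0 < ‖q‖) (hq1 : ‖q‖ < 1)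
    (hb : b ≠ 0) (hb2 : b ^ 2 ≠ 1)
    (hbq : ∀ m : ℤ, b ≠ q ^ m ∧ b ≠ -q ^ m)
    (α β : ℕ → ℂ)
    (hBailey : ∀ n : ℕ, β n = ∑ j ∈ Finset.range (n + 1),
      α j / (qPoch q q (n - j) * qPoch q q (n + j))) :
    ∀ n : ℕ,
      β n / (1 - b ^ 2 * q ^ (2 * n)) =
        ∑ j ∈ Finset.range (n + 1),
          (alphaStar q b α j / (2 * (1 - b)) + alphaStar q (-b) α j / (2 * (1 + b))) /
            (qPoch q q (n - j) * qPoch (q ^ 2) q (n + j)) :=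
  stmt7_general q b hq0 hq1 hb hbq α β hBailey
end

section
/- Let q ∈ ℂ with 0 < |q| < 1 and let m ≥ 1 be an integer. Then Σ_S (−1)^{max S} q^{Σ_{s∈S} s} = (−1)^m q^{m(m+1)/2} / ∏_{k=1}^{m} (1 + q^k), where the sum on the left runs over all finite sets S of positive integers with |S| = m, and the series converges absolutely. -/
/-!
A set `S` of `m + 1` positive integers with least element `a + 1` is `{a + 1} ∪ (a + 1 + T)`
for a unique set `T` of `m` positive integers. Then `max S = a + 1 + max T` and
`∑ S = (m + 1)(a + 1) + ∑ T`, so the weight of `S` is `(-q^(m+1))^(a+1)` times that of `T`.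
Summing the geometric series over `a ≥ 0`, the generating function `F_m` of the `m`-element sets
satisfies `F_(m+1) = -q^(m+1) / (1 + q^(m+1)) · F_m`,
and the absolute convergence is carried along the same induction.
-/

open Finset

def shiftCons (a : ℕ) (T : Finset ℕ) : Finset ℕ :=
  insert (a + 1) (T.map (addLeftEmbedding (a + 1)))

section shiftCons

variable {a : ℕ} {T : Finset ℕ}

lemma mem_shiftCons {x : ℕ} :
    x ∈ shiftCons a T ↔ x = a + 1 ∨ ∃ t ∈ T, a + 1 + t = x := by
  simp [shiftCons]

lemma le_of_mem_shiftCons {x : ℕ} (hx : x ∈ shiftCons a T) : a + 1 ≤ x := by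
  rcases mem_shiftCons.1 hx with rfl | ⟨t, -, rfl⟩ <;> omega

lemma pos_of_mem_shiftCons {x : ℕ} (hx : x ∈ shiftCons a T) : 0 < x :=
  Nat.lt_of_lt_of_le a.succ_pos (le_of_mem_shiftCons hx)

lemma succ_notMem_map_addLeftEmbedding (hT : ∀ t ∈ T, 0 < t) :
    a + 1 ∉ T.map (addLeftEmbedding (a + 1)) := by
  simp only [mem_map, addLeftEmbedding_apply, not_exists, not_and]
  intro t ht h
  have := hT t ht
  omega

lemma card_shiftCons (hT : ∀ t ∈ T, 0 < t) : (shiftCons a T).card = T.card + 1 := by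
  rw [shiftCons, card_insert_of_notMem (succ_notMem_map_addLeftEmbedding hT), card_map]

lemma sum_shiftCons (hT : ∀ t ∈ T, 0 < t) :
    ∑ s ∈ shiftCons a T, s = (T.card + 1) * (a + 1) + ∑ t ∈ T, t := by
  rw [shiftCons, sum_insert (succ_notMem_map_addLeftEmbedding hT), sum_map]
  simp only [addLeftEmbedding_apply]
  rw [sum_add_distrib, sum_const, smul_eq_mul]
  ring

lemma sup_shiftCons : (shiftCons a T).sup id = a + 1 + T.sup id := by
  apply le_antisymm
  · refine Finset.sup_le fun x hx => ?_
    rcases mem_shiftCons.1 hx with rfl | ⟨t, ht, rfl⟩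
    · exact Nat.le_add_right _ _
    · simpa using le_sup (f := id) ht
  · rcases T.eq_empty_or_nonempty with rfl | ⟨t, ht⟩
    · exact le_sup (f := id) (mem_shiftCons.2 (Or.inl rfl))
    · obtain ⟨s, hs, hsup⟩ := exists_mem_eq_sup T ⟨t, ht⟩ id
      rw [hsup]
      exact le_sup (f := id) (mem_shiftCons.2 (Or.inr ⟨s, hs, rfl⟩))

lemma shiftCons_inj {b : ℕ} {T' : Finset ℕ} (hT : ∀ t ∈ T, 0 < t)
    (hT' : ∀ t ∈ T', 0 < t) :
    shiftCons a T = shiftCons b T' ↔ a = b ∧ T = T' := by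
  refine ⟨fun h => ?_, by rintro ⟨rfl, rfl⟩; rfl⟩
  have hab : a = b := by
    have h₁ := le_of_mem_shiftCons (h ▸ mem_shiftCons.2 (Or.inl rfl) : a + 1 ∈ shiftCons b T')
    have h₂ := le_of_mem_shiftCons (h ▸ mem_shiftCons.2 (Or.inl rfl) : b + 1 ∈ shiftCons a T)
    omega
  subst hab
  refine ⟨rfl, ?_⟩
  have key : ∀ {U : Finset ℕ}, (∀ t ∈ U, 0 < t) →
      ∀ t, t ∈ U ↔ 0 < t ∧ a + 1 + t ∈ shiftCons a U := by
    intro U hU t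
    simp only [mem_shiftCons]
    constructor
    · exact fun ht => ⟨hU t ht, Or.inr ⟨t, ht, rfl⟩⟩
    · rintro ⟨ht, h | ⟨u, hu, hut⟩⟩
      · omega
      · rwa [← Nat.add_left_cancel hut]
  ext t
  rw [key hT, key hT', h]

lemma exists_shiftCons_eq {S : Finset ℕ} (hS : ∀ s ∈ S, 0 < s) (hne : S.Nonempty) :
    ∃ a T, (∀ t ∈ T, 0 < t) ∧ shiftCons a T = S := by
  set μ := S.min' hne
  have hμ : 0 < μ := hS _ (S.min'_mem hne)
  refine ⟨μ - 1, (S.erase μ).image (· - μ), ?_, ?_⟩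
  · simp only [mem_image, mem_erase]
    rintro _ ⟨s, ⟨hsμ, hs⟩, rfl⟩
    have := S.min'_le s hs
    omega
  · ext x
    simp only [mem_shiftCons, mem_image, mem_erase]
    constructor
    · rintro (rfl | ⟨_, ⟨s, ⟨-, hs⟩, rfl⟩, rfl⟩)
      · rw [Nat.sub_add_cancel hμ]
        exact S.min'_mem hne
      · have := S.min'_le s hs
        rwa [show μ - 1 + 1 + (s - μ) = s by omega]
    · intro hx
      have := S.min'_le x hx
      by_cases hxμ : x = μ
      · left; omega
      · right; exact ⟨x - μ, ⟨x, ⟨hxμ, hx⟩, rfl⟩, by omega⟩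

end shiftCons

abbrev DistinctParts (m : ℕ) := {S : Finset ℕ // (∀ s ∈ S, 0 < s) ∧ S.card = m}

instance : Unique (DistinctParts 0) where
  default := ⟨∅, by simp, rfl⟩
  uniq S := Subtype.ext (card_eq_zero.1 S.2.2)

noncomputable def shiftConsEquiv (m : ℕ) : ℕ × DistinctParts m ≃ DistinctParts (m + 1) :=
  Equiv.ofBijective
    (fun p => ⟨shiftCons p.1 p.2.1, fun _ => pos_of_mem_shiftCons,
      by rw [card_shiftCons p.2.2.1, p.2.2.2]⟩)
    ⟨fun ⟨a, T⟩ ⟨b, T'⟩ h => by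
      obtain ⟨rfl, hT⟩ := (shiftCons_inj T.2.1 T'.2.1).1 (congrArg Subtype.val h)
      rw [Subtype.ext hT],
    fun S => by
      obtain ⟨a, T, hT, hS⟩ := exists_shiftCons_eq S.2.1 (card_pos.1 (by omega))
      have hcard : T.card = m := by
        have := S.2.2
        rw [← hS, card_shiftCons hT] at this
        omega
      exact ⟨(a, ⟨T, hT, hcard⟩), Subtype.ext hS⟩⟩

section Weight

variable {𝕜 : Type*} [NormedField 𝕜]

def signedWeight (q : 𝕜) (S : Finset ℕ) : 𝕜 := (-1) ^ S.sup id * q ^ ∑ s ∈ S, s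

lemma signedWeight_shiftCons (q : 𝕜) {a : ℕ} {T : Finset ℕ} (hT : ∀ t ∈ T, 0 < t) :
    signedWeight q (shiftCons a T) = (-q ^ (T.card + 1)) ^ (a + 1) * signedWeight q T := by
  rw [signedWeight, signedWeight, sup_shiftCons, sum_shiftCons hT]
  ring

lemma summable_norm_pow_succ {x : 𝕜} (hx : ‖x‖ < 1) :
    Summable fun a : ℕ => ‖x ^ (a + 1)‖ := by
  simpa only [norm_pow] using
    (summable_nat_add_iff 1).2 (summable_geometric_of_lt_one (norm_nonneg x) hx)

lemma tsum_pow_succ {x : 𝕜} (hx : ‖x‖ < 1) : ∑' a : ℕ, x ^ (a + 1) = x / (1 - x) := by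
  simp only [pow_succ', tsum_mul_left, tsum_geometric_of_norm_lt_one hx, div_eq_mul_inv]

theorem summable_norm_signedWeight_and_tsum [CompleteSpace 𝕜] {q : 𝕜} (hq : ‖q‖ < 1)
    (m : ℕ) :
    Summable (fun S : DistinctParts m => ‖signedWeight q S.1‖) ∧
    ∑' S : DistinctParts m, signedWeight q S.1 =
      (-1) ^ m * q ^ (m * (m + 1) / 2) / ∏ k ∈ Icc 1 m, (1 + q ^ k) := by
  induction m with
  | zero =>
    refine ⟨Summable.of_finite, ?_⟩
    simp [tsum_fintype, signedWeight, show (default : DistinctParts 0).1 = ∅ from rfl]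
  | succ m ih =>
    obtain ⟨hsum, htsum⟩ := ih
    have hx : ‖-q ^ (m + 1)‖ < 1 := by
      rw [norm_neg, norm_pow]
      exact pow_lt_one₀ (norm_nonneg q) hq m.succ_ne_zero
    have hsplit : ∀ p : ℕ × DistinctParts m, signedWeight q (shiftConsEquiv m p).1 =
        (-q ^ (m + 1)) ^ (p.1 + 1) * signedWeight q p.2.1 := by
      rintro ⟨a, T, hT, rfl⟩
      exact signedWeight_shiftCons q hT
    have htriangle : (m + 1) * (m + 1 + 1) / 2 = m * (m + 1) / 2 + (m + 1) := by
      rw [show (m + 1) * (m + 1 + 1) = m * (m + 1) + 2 * (m + 1) by ring,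
        Nat.add_mul_div_left _ _ two_pos]
    refine ⟨(shiftConsEquiv m).summable_iff.1 ?_, ?_⟩
    · simpa only [Function.comp_def, hsplit] using (summable_norm_pow_succ hx).mul_norm hsum
    calc ∑' S : DistinctParts (m + 1), signedWeight q S.1
        = ∑' p, signedWeight q (shiftConsEquiv m p).1 :=
          ((shiftConsEquiv m).tsum_eq fun S => signedWeight q S.1).symm
      _ = ∑' p : ℕ × DistinctParts m, (-q ^ (m + 1)) ^ (p.1 + 1) * signedWeight q p.2.1 :=
        tsum_congr hsplit
      _ = (∑' a : ℕ, (-q ^ (m + 1)) ^ (a + 1)) * ∑' T : DistinctParts m, signedWeight q T.1 :=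
        (tsum_mul_tsum_of_summable_norm (f := fun a : ℕ => (-q ^ (m + 1)) ^ (a + 1))
          (g := fun T : DistinctParts m => signedWeight q T.1) (summable_norm_pow_succ hx)
          hsum).symm
      _ = _ := by
        rw [tsum_pow_succ hx, htsum, prod_Icc_succ_top (by omega), htriangle, sub_neg_eq_add,
          div_mul_div_comm, mul_comm (1 + q ^ (m + 1))]
        ring

end Weight

theorem stmt12_general (q : ℂ) (hq1 : ‖q‖ < 1)
    (m : ℕ) :
    Summable (fun S : {S : Finset ℕ // (∀ s ∈ S, 0 < s) ∧ S.card = m} =>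
      (-1 : ℂ) ^ (S.1.sup id) * q ^ (∑ s ∈ S.1, s)) ∧
    ∑' S : {S : Finset ℕ // (∀ s ∈ S, 0 < s) ∧ S.card = m},
        (-1 : ℂ) ^ (S.1.sup id) * q ^ (∑ s ∈ S.1, s) =
      (-1 : ℂ) ^ m * q ^ (m * (m + 1) / 2) / ∏ k ∈ Finset.Icc 1 m, (1 + q ^ k) := by
  obtain ⟨hsummable, htsum⟩ := summable_norm_signedWeight_and_tsum hq1 m
  exact ⟨hsummable.of_norm, htsum⟩

/-- The combinatorial claim in the proof of Theorem 1: the generating function for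
partitions into `m` distinct (positive) parts, each weighted by `(−1)` raised to the
largest part, equals `(−1)^m q^{m(m+1)/2} / (−q;q)_m`. The sum runs over all finite
sets `S` of positive integers with `|S| = m`; `S.sup id` is the largest part. -/
theorem stmt12 (q : ℂ) (hq0 : 0 < ‖q‖) (hq1 : ‖q‖ < 1)
    (m : ℕ) (hm : 1 ≤ m) :
    Summable (fun S : {S : Finset ℕ // (∀ s ∈ S, 0 < s) ∧ S.card = m} =>
      (-1 : ℂ) ^ (S.1.sup id) * q ^ (∑ s ∈ S.1, s)) ∧
    ∑' S : {S : Finset ℕ // (∀ s ∈ S, 0 < s) ∧ S.card = m},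
        (-1 : ℂ) ^ (S.1.sup id) * q ^ (∑ s ∈ S.1, s) =
      (-1 : ℂ) ^ m * q ^ (m * (m + 1) / 2) / ∏ k ∈ Finset.Icc 1 m, (1 + q ^ k) :=
  stmt12_general q hq1 m
end
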